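/- Let P be a Paley type partial difference set in a finite abelian group G. Then the family {P, P∪{0_G}, P∪{0_G}, G∖P} is a difference family of type H_4* in G that satisfies condition (c1): with S_0 = P, S_1 = P∪{0}, S_2 = P∪{0}, S_3 = G∖P, one has S_0·S_2^{(−1)} + S_2·S_0^{(−1)} + S_1·S_3^{(−1)} + S_3·S_1^{(−1)} = (Σ_{i=0}^{3}|S_i| − |G|)·G in ℤ[G]. -/

import Mathlib

open Finset

noncomputable section

variable {G : Type*}

/-- The element of the group ring `ℤ[G]` associated to a finite subset `D ⊆ G`. -/
def grp [AddCommGroup G] [DecidableEq G] (D : Finset G) : AddMonoidAlgebra ℤ G :=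
  ∑ x ∈ D, AddMonoidAlgebra.single x 1

/-- `D^{(-1)} = {-x : x ∈ D}`. -/
def negSet [AddCommGroup G] [DecidableEq G] (D : Finset G) : Finset G :=
  D.image (fun x => -x)

/-- A subset is symmetric if `D = -D`. -/
def IsSymmetric [AddCommGroup G] [DecidableEq G] (D : Finset G) : Prop :=
  negSet D = D

/-- `G* = G \ {0}` as a finset. -/
def Gstar (G : Type*) [AddCommGroup G] [Fintype G] [DecidableEq G] : Finset G :=
  Finset.univ \ {0}

/-- A difference family of type `H`: four blocks with `λ = Σ|D_i| - |G|`. -/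
def IsTypeH [AddCommGroup G] [Fintype G] [DecidableEq G] (D : Fin 4 → Finset G) : Prop :=
  ∑ i, grp (D i) * grp (negSet (D i)) =
    ((∑ i, ((D i).card : ℤ)) - (Fintype.card G : ℤ)) • grp (Finset.univ : Finset G)
      + (Fintype.card G : ℤ) • AddMonoidAlgebra.single (0 : G) (1 : ℤ)

/-- A difference family of type `H_4^*`: four blocks with `λ = Σ|B_i| - (|G|+1)`. -/
def IsTypeH4star [AddCommGroup G] [Fintype G] [DecidableEq G] (B : Fin 4 → Finset G) : Prop :=
  ∑ i, grp (B i) * grp (negSet (B i)) =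
    ((∑ i, ((B i).card : ℤ)) - ((Fintype.card G : ℤ) + 1)) • grp (Finset.univ : Finset G)
      + ((Fintype.card G : ℤ) + 1) • AddMonoidAlgebra.single (0 : G) (1 : ℤ)

/-- A difference family of type `H_2^*`: two blocks with `λ = Σ|S_i| - (|G|+1)/2`. -/
def IsTypeH2star [AddCommGroup G] [Fintype G] [DecidableEq G] (S : Fin 2 → Finset G) : Prop :=
  ∑ i, grp (S i) * grp (negSet (S i)) =
    ((∑ i, ((S i).card : ℤ)) - ((Fintype.card G : ℤ) + 1) / 2) • grp (Finset.univ : Finset G)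
      + (((Fintype.card G : ℤ) + 1) / 2) • AddMonoidAlgebra.single (0 : G) (1 : ℤ)

/-- Condition (d3). -/
def CondD3 [AddCommGroup G] [Fintype G] [DecidableEq G] (D : Fin 4 → Finset G) : Prop :=
  grp (D 0) * grp (negSet (D 2)) + grp (D 2) * grp (negSet (D 0))
    + grp (D 1) * grp (negSet (D 3)) + grp (D 3) * grp (negSet (D 1)) =
    ((∑ i, ((D i).card : ℤ)) - (Fintype.card G : ℤ) + 1) • grp (Finset.univ : Finset G)

/-- Condition (c1). -/
def CondC1 [AddCommGroup G] [Fintype G] [DecidableEq G] (S : Fin 4 → Finset G) : Prop :=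
  grp (S 0) * grp (negSet (S 2)) + grp (S 2) * grp (negSet (S 0))
    + grp (S 1) * grp (negSet (S 3)) + grp (S 3) * grp (negSet (S 1)) =
    ((∑ i, ((S i).card : ℤ)) - (Fintype.card G : ℤ)) • grp (Finset.univ : Finset G)

/-- Condition (d2). -/
def CondD2 [AddCommGroup G] [Fintype G] [DecidableEq G] (D : Fin 4 → Finset G) : Prop :=
  ∃ E₀ E₁ : Finset G, E₀ ⊆ Gstar G ∧ E₁ ⊆ Gstar G ∧
    grp (D 0) + grp (D 1) - grp (D 2) - grp (D 3) = grp E₀ - grp (Gstar G \ E₀) ∧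
    grp (D 0) + grp (D 3) - grp (D 1) - grp (D 2) = grp E₁ - grp (Gstar G \ E₁) ∧
    IsTypeH4star ![E₀, E₁, Gstar G \ E₀, Gstar G \ E₁]

/-- A building family: eight symmetric, pairwise disjoint subsets partitioning `G*`,
satisfying (a3) and (a4). -/
def IsBuildingFamily [AddCommGroup G] [Fintype G] [DecidableEq G] (A : Fin 8 → Finset G) : Prop :=
  (∀ i, IsSymmetric (A i)) ∧
  (∀ i j, i ≠ j → Disjoint (A i) (A j)) ∧
  (Finset.univ.biUnion A = Gstar G) ∧
  IsTypeH4star ![A 0 ∪ A 1 ∪ A 6 ∪ A 7, A 2 ∪ A 3 ∪ A 4 ∪ A 5,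
    A 0 ∪ A 3 ∪ A 5 ∪ A 6, A 1 ∪ A 2 ∪ A 4 ∪ A 7] ∧
  (∑ i, grp (A i) * grp (A i)) - (∑ i, grp (A i) * grp (A (i + 4))) =
    ((Fintype.card G : ℤ) - 1) • AddMonoidAlgebra.single (0 : G) (1 : ℤ)
      + ((grp (A 0) + grp (A 1) + grp (A 2) + grp (A 3))
        - (grp (A 4) + grp (A 5) + grp (A 6) + grp (A 7)))

end

/-!
Write `p` for `P` in `ℤ[G]` and `U` for `G`. Since `P = -P` and `0 ∉ P`, all four blocks are
symmetric, so they contribute `p`, `1 + p`, `1 + p` and `U - p`, and `pU = |P| U`.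
Condition (c1) then collapses to `2(1 + p)U = 2(|P| + 1)U` for any symmetric `P` avoiding `0`.
For type `H₄*`, the sum of the `Sᵢ Sᵢ^(-1)` is `4p² + 4p + 2 + (|G| - 2|P|)U`, and the Paley
equation `p² = k - p + kU` turns it into `(4k + 2) + (4k + 1)U`. That `0 ∉ P` is read off the
coefficient of `0` in the Paley equation: `|P| = 2k` on the left, `2k - [0 ∈ P]` on the right.
-/

open AddMonoidAlgebra

section GroupRing

variable {G : Type*} [AddCommGroup G] [DecidableEq G]

lemma mem_negSet {D : Finset G} {a : G} : a ∈ negSet D ↔ -a ∈ D := by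
  simp [negSet, neg_eq_iff_eq_neg]

lemma IsSymmetric.negSet_eq {D : Finset G} (hD : IsSymmetric D) : negSet D = D := hD

lemma IsSymmetric.neg_mem_iff {D : Finset G} (hD : IsSymmetric D) {a : G} : -a ∈ D ↔ a ∈ D := by
  rw [← mem_negSet, hD.negSet_eq]

lemma IsSymmetric.insert_zero {D : Finset G} (hD : IsSymmetric D) :
    IsSymmetric (insert 0 D) := by
  ext a
  simp [mem_negSet, hD.neg_mem_iff]

lemma IsSymmetric.univ_sdiff [Fintype G] {D : Finset G} (hD : IsSymmetric D) :
    IsSymmetric (univ \ D) := by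
  ext a
  simp [mem_negSet, hD.neg_mem_iff]

lemma coeff_grp (D : Finset G) (a : G) : (grp D).coeff a = if a ∈ D then 1 else 0 := by
  simp [grp, Finsupp.single_apply, eq_comm]

lemma coeff_grp_mul_grp (D E : Finset G) (a : G) :
    (grp D * grp E).coeff a = #{x ∈ D | a - x ∈ E} := by
  rw [grp, Finset.sum_mul, coeff_sum, Finsupp.finsetSum_apply, Finset.card_filter]
  push_cast
  refine Finset.sum_congr rfl fun x _ => ?_
  rw [coeff_single_mul_apply, one_mul, coeff_grp, neg_add_eq_sub]

lemma IsSymmetric.coeff_zero_grp_mul_grp {D : Finset G} (hD : IsSymmetric D) :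
    (grp D * grp D).coeff 0 = #D := by
  rw [coeff_grp_mul_grp, Finset.filter_true_of_mem fun x hx => by rwa [zero_sub, hD.neg_mem_iff]]

lemma grp_insert_zero {D : Finset G} (h0 : 0 ∉ D) : grp (insert 0 D) = 1 + grp D := by
  rw [grp, Finset.sum_insert h0, ← grp, one_def]

variable [Fintype G]

lemma grp_univ_sdiff (D : Finset G) : grp (univ \ D) = grp univ - grp D := by
  rw [grp, grp, grp, Finset.sum_sdiff_eq_sub (Finset.subset_univ D)]

lemma grp_Gstar : grp (Gstar G) = grp univ - 1 := by
  rw [Gstar, grp_univ_sdiff, one_def, grp, grp, sum_singleton]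

lemma grp_mul_grp_univ (D : Finset G) : grp D * grp univ = #D • grp univ := by
  ext a
  rw [coeff_grp_mul_grp, coeff_smul, Finsupp.smul_apply, coeff_grp]
  simp

end GroupRing

section Paley

variable {G : Type*} [AddCommGroup G] [DecidableEq G] [Fintype G] {P : Finset G}

lemma zero_notMem_of_paley (k : ℕ) (hsym : IsSymmetric P) (hcard : #P = 2 * k)
    (hP : grp P * grp P = (2 * k : ℤ) • single (0 : G) (1 : ℤ) - grp P + (k : ℤ) • grp (Gstar G)) :
    (0 : G) ∉ P := by
  intro h0
  have hcoeff := congrArg (·.coeff 0) hP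
  simp only [hsym.coeff_zero_grp_mul_grp, coeff_add, coeff_sub, coeff_smul, coeff_single,
    Finsupp.add_apply, Finsupp.sub_apply, Finsupp.smul_apply, coeff_grp, hcard, h0] at hcoeff
  simp [Gstar] at hcoeff
  omega

lemma condC1_of_isSymmetric (hsym : IsSymmetric P) (h0 : (0 : G) ∉ P) :
    CondC1 ![P, insert 0 P, insert 0 P, univ \ P] := by
  unfold CondC1
  simp only [Fin.sum_univ_four, Matrix.cons_val_zero, Matrix.cons_val_one, Matrix.cons_val_two,
    Matrix.cons_val_three, Matrix.head_cons, Matrix.tail_cons, hsym.negSet_eq,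
    hsym.insert_zero.negSet_eq, hsym.univ_sdiff.negSet_eq, grp_insert_zero h0, grp_univ_sdiff,
    Finset.card_insert_of_notMem h0, Finset.card_univ_sdiff, zsmul_eq_mul]
  push_cast [Nat.cast_sub P.card_le_univ]
  linear_combination (2 : ℤ[G]) * grp_mul_grp_univ P

lemma isTypeH4star_of_paley (k : ℕ) (hv : Fintype.card G = 4 * k + 1) (hsym : IsSymmetric P)
    (h0 : (0 : G) ∉ P) (hcard : #P = 2 * k)
    (hP : grp P * grp P = (2 * k : ℤ) • single (0 : G) (1 : ℤ) - grp P + (k : ℤ) • grp (Gstar G)) :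
    IsTypeH4star ![P, insert 0 P, insert 0 P, univ \ P] := by
  have hP' : grp P * grp P = (k : ℤ[G]) - grp P + (k : ℤ[G]) * grp univ := by
    rw [hP, grp_Gstar, ← one_def, zsmul_eq_mul, zsmul_eq_mul]
    push_cast
    ring
  have hPU : grp P * grp univ = 2 * (k : ℤ[G]) * grp univ := by
    rw [grp_mul_grp_univ, hcard, nsmul_eq_mul]
    push_cast
    ring
  have hUU : grp univ * grp univ =
      (4 * k + 1 : ℤ[G]) * grp univ := by
    rw [grp_mul_grp_univ, Finset.card_univ, hv, nsmul_eq_mul]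
    push_cast
    ring
  have hcompl : #(univ \ P) = 2 * k + 1 := by
    rw [Finset.card_univ_sdiff, hv, hcard]
    omega
  unfold IsTypeH4star
  simp only [Fin.sum_univ_four, Matrix.cons_val_zero, Matrix.cons_val_one, Matrix.cons_val_two,
    Matrix.cons_val_three, Matrix.head_cons, Matrix.tail_cons, hsym.negSet_eq,
    hsym.insert_zero.negSet_eq, hsym.univ_sdiff.negSet_eq, grp_insert_zero h0, grp_univ_sdiff,
    Finset.card_insert_of_notMem h0, hcompl, hcard, hv, ← one_def, zsmul_eq_mul]
  push_cast
  linear_combination 4 * hP' - 2 * hPU + hUU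

end Paley

/-- a Paley type partial difference set yields a type-`H_4^*` difference
family `{P, P∪{0}, P∪{0}, G∖P}` satisfying (c1). Here `|G| = 4k+1`. -/
theorem paley_pds_gives_H4star_with_c1 {G : Type*} [AddCommGroup G] [Fintype G]
    [DecidableEq G] (P : Finset G) (k : ℕ)
    (hv : Fintype.card G = 4 * k + 1) (hsymP : IsSymmetric P) (hcard : P.card = 2 * k)
    (hP : grp P * grp P =
      (2 * k : ℤ) • AddMonoidAlgebra.single (0 : G) (1 : ℤ) - grp P + (k : ℤ) • grp (Gstar G)) :
    IsTypeH4star ![P, insert (0 : G) P, insert (0 : G) P, (Finset.univ : Finset G) \ P] ∧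
      CondC1 ![P, insert (0 : G) P, insert (0 : G) P, (Finset.univ : Finset G) \ P] := by
  have h0 := zero_notMem_of_paley k hsymP hcard hP
  exact ⟨isTypeH4star_of_paley k hv hsymP h0 hcard hP, condC1_of_isSymmetric hsymP h0⟩
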